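/- arXiv:0905.0044 — 2 statements merged into one kernel-verified Lean document; each statement's English description precedes it below -/
import Mathlib

section
/- If P is an orthogonal projection on ℂ^{m×n} that commutes with P_Ψ, where Ψ is a set of at most r rank-one matrices, then for all X ∈ ℂ^{m×n}, (1 − δ_r(A)) ‖P P_Ψ X‖_F ≤ ‖P P_Ψ A* A P P_Ψ X‖_F. -/
open scoped BigOperators Matrix

/-- Frobenius (trace) inner product on complex matrices: `⟪X, Y⟫ = tr(Yᴴ X)`. -/
noncomputable def frobInner {m n : ℕ} (X Y : Matrix (Fin m) (Fin n) ℂ) : ℂ :=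
  (Yᴴ * X).trace

/-- Frobenius norm of a complex matrix. -/
noncomputable def frobNorm {m n : ℕ} (X : Matrix (Fin m) (Fin n) ℂ) : ℝ :=
  Real.sqrt (∑ i, ∑ j, ‖X i j‖ ^ 2)

/-- Euclidean norm on `ℂ^p`. -/
noncomputable def eNorm {p : ℕ} (v : Fin p → ℂ) : ℝ :=
  Real.sqrt (∑ k, ‖v k‖ ^ 2)

/-- Hermitian inner product on `ℂ^p` (linear in the first argument). -/
noncomputable def eInner {p : ℕ} (u v : Fin p → ℂ) : ℂ :=
  ∑ k, (starRingEnd ℂ) (v k) * u k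

/-- `A` satisfies the rank-`r` restricted isometry inequalities with constant `δ`:
`(1-δ)‖X‖_F² ≤ ‖A X‖₂² ≤ (1+δ)‖X‖_F²` for all `X` with `rank X ≤ r`. -/
def RIPwith {m n p : ℕ} (A : Matrix (Fin m) (Fin n) ℂ →ₗ[ℂ] (Fin p → ℂ)) (r : ℕ) (δ : ℝ) : Prop :=
  ∀ X : Matrix (Fin m) (Fin n) ℂ, X.rank ≤ r →
    (1 - δ) * frobNorm X ^ 2 ≤ eNorm (A X) ^ 2 ∧ eNorm (A X) ^ 2 ≤ (1 + δ) * frobNorm X ^ 2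

/-- `P` is the orthogonal projection onto the span of `S`
with respect to the Frobenius inner product. -/
def IsOrthProjOn {m n : ℕ} (P : Matrix (Fin m) (Fin n) ℂ →ₗ[ℂ] Matrix (Fin m) (Fin n) ℂ)
    (S : Set (Matrix (Fin m) (Fin n) ℂ)) : Prop :=
  (∀ X, P (P X) = P X) ∧ LinearMap.range P = Submodule.span ℂ S ∧
    (∀ X Y, frobInner (P X) Y = frobInner X (P Y))

/-- `B` is the adjoint of `A` w.r.t. the Frobenius and Euclidean inner products. -/
def IsAdjoint {m n p : ℕ} (A : Matrix (Fin m) (Fin n) ℂ →ₗ[ℂ] (Fin p → ℂ))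
    (B : (Fin p → ℂ) →ₗ[ℂ] Matrix (Fin m) (Fin n) ℂ) : Prop :=
  ∀ X v, eInner (A X) v = frobInner X (B v)

/-!
`U = Q P_Ψ X` lies in the span of the rank-one matrices of `Ψ`, so `rank U ≤ |Ψ| ≤ r` and the
restricted isometry property gives `(1 - δ) ‖U‖² ≤ ‖A U‖² = Re ⟪U, A* A U⟫`. As `Q P_Ψ` is a
self-adjoint projection fixing `U`, the right side equals `Re ⟪U, Q P_Ψ A* A U⟫`, and
Cauchy–Schwarz bounds it by `‖U‖ ‖Q P_Ψ A* A U‖`. Dividing by `‖U‖` concludes.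
-/

namespace Matrix

variable {m n ι K : Type*} [Fintype n] [Field K]

theorem rank_finsetSum_le [Fintype m] (s : Finset ι) (f : ι → Matrix m n K) :
    (∑ i ∈ s, f i).rank ≤ ∑ i ∈ s, (f i).rank := by
  classical
  have hrank (A : Matrix m n K) : (A.rank : Cardinal) = (toLin' A).rank := by
    rw [rank, ← toLin'_apply', LinearMap.rank, Module.finrank_eq_rank]
  have h := LinearMap.rank_finsetSum_le s fun i => toLin' (f i)
  simp only [← map_sum, ← hrank] at h
  exact_mod_cast h

theorem rank_smul_le (c : K) (A : Matrix m n K) : (c • A).rank ≤ A.rank := by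
  rcases eq_or_ne c 0 with rfl | hc
  · simp [rank_zero]
  · exact (rank_smul_of_mem_nonZeroDivisors A (mem_nonZeroDivisors_of_ne_zero hc)).le

theorem rank_le_card_of_mem_span [Fintype m] {S : Finset (Matrix m n K)}
    (hS : ∀ ψ ∈ S, ψ.rank ≤ 1) {Y : Matrix m n K}
    (hY : Y ∈ Submodule.span K (S : Set (Matrix m n K))) :
    Y.rank ≤ S.card := by
  obtain ⟨c, -, rfl⟩ := Submodule.mem_span_finset.mp hY
  calc (∑ ψ ∈ S, c ψ • ψ).rank ≤ ∑ ψ ∈ S, (c ψ • ψ).rank := rank_finsetSum_le _ _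
    _ ≤ ∑ _ ∈ S, 1 := Finset.sum_le_sum fun ψ hψ => (rank_smul_le _ _).trans (hS ψ hψ)
    _ = S.card := by simp

end Matrix

lemma le_of_mul_sq_le_mul {a u z : ℝ} (h : a * u ^ 2 ≤ u * z) (hu : 0 ≤ u) (hz : 0 ≤ z) :
    a * u ≤ z := by
  rcases hu.eq_or_lt with rfl | hu
  · simpa using hz
  · exact le_of_mul_le_mul_right (by linarith) hu

section Vectorization

variable {m n p : ℕ}

noncomputable def frobVec (X : Matrix (Fin m) (Fin n) ℂ) : EuclideanSpace ℂ (Fin m × Fin n) :=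
  WithLp.toLp 2 (Function.uncurry X)

lemma frobInner_eq_inner (X Y : Matrix (Fin m) (Fin n) ℂ) :
    frobInner X Y = inner ℂ (frobVec Y) (frobVec X) := by
  simp only [frobInner, Matrix.trace, Matrix.diag, Matrix.mul_apply, Matrix.conjTranspose_apply,
    PiLp.inner_apply, frobVec, Function.uncurry, RCLike.inner_apply, Fintype.sum_prod_type]
  exact Finset.sum_comm.trans
    (Finset.sum_congr rfl fun _ _ => Finset.sum_congr rfl fun _ _ => mul_comm _ _)

lemma frobNorm_eq_norm (X : Matrix (Fin m) (Fin n) ℂ) : frobNorm X = ‖frobVec X‖ := by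
  rw [EuclideanSpace.norm_eq, frobNorm, Fintype.sum_prod_type]
  rfl

lemma frobNorm_nonneg (X : Matrix (Fin m) (Fin n) ℂ) : 0 ≤ frobNorm X :=
  Real.sqrt_nonneg _

lemma re_frobInner_le_frobNorm_mul (X Y : Matrix (Fin m) (Fin n) ℂ) :
    (frobInner X Y).re ≤ frobNorm X * frobNorm Y := by
  rw [frobInner_eq_inner, frobNorm_eq_norm, frobNorm_eq_norm, mul_comm]
  exact (Complex.re_le_norm _).trans (norm_inner_le_norm _ _)

lemma eInner_eq_inner (u v : Fin p → ℂ) :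
    eInner u v = inner ℂ (WithLp.toLp 2 v : EuclideanSpace ℂ (Fin p)) (WithLp.toLp 2 u) := by
  simp only [eInner, PiLp.inner_apply, RCLike.inner_apply]
  exact Finset.sum_congr rfl fun _ _ => mul_comm _ _

lemma eNorm_sq_eq_re_eInner (v : Fin p → ℂ) : eNorm v ^ 2 = (eInner v v).re := by
  rw [eInner_eq_inner, ← RCLike.re_to_complex, inner_self_eq_norm_sq, EuclideanSpace.norm_eq]
  rfl

lemma IsAdjoint.eNorm_sq_eq_re_frobInner {A : Matrix (Fin m) (Fin n) ℂ →ₗ[ℂ] (Fin p → ℂ)}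
    {B : (Fin p → ℂ) →ₗ[ℂ] Matrix (Fin m) (Fin n) ℂ} (hAB : IsAdjoint A B)
    (X : Matrix (Fin m) (Fin n) ℂ) : eNorm (A X) ^ 2 = (frobInner X (B (A X))).re := by
  rw [eNorm_sq_eq_re_eInner, hAB]

end Vectorization

theorem proj_commute_lower_bound_general {m n p r : ℕ}
    (A : Matrix (Fin m) (Fin n) ℂ →ₗ[ℂ] (Fin p → ℂ))
    (δ : ℝ) (hA : RIPwith A r δ)
    (Astar : (Fin p → ℂ) →ₗ[ℂ] Matrix (Fin m) (Fin n) ℂ) (hadj : IsAdjoint A Astar)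
    (Ψ : Finset (Matrix (Fin m) (Fin n) ℂ)) (hΨ : ∀ ψ ∈ Ψ, ψ.rank = 1) (hcard : Ψ.card ≤ r)
    (P : Matrix (Fin m) (Fin n) ℂ →ₗ[ℂ] Matrix (Fin m) (Fin n) ℂ)
    (hP : IsOrthProjOn P (Ψ : Set (Matrix (Fin m) (Fin n) ℂ)))
    (Q : Matrix (Fin m) (Fin n) ℂ →ₗ[ℂ] Matrix (Fin m) (Fin n) ℂ)
    (hQidem : ∀ X, Q (Q X) = Q X)
    (hQsa : ∀ X Y, frobInner (Q X) Y = frobInner X (Q Y))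
    (hcomm : ∀ X, Q (P X) = P (Q X)) :
    ∀ X : Matrix (Fin m) (Fin n) ℂ,
      (1 - δ) * frobNorm (Q (P X)) ≤ frobNorm (Q (P (Astar (A (Q (P X)))))) := by
  intro X
  obtain ⟨hPidem, hPrange, hPsa⟩ := hP
  set U := Q (P X)
  have hU_fixed : Q (P U) = U := by rw [← hcomm (P X), hQidem, hPidem]
  have hU_rank : U.rank ≤ r :=
    (Matrix.rank_le_card_of_mem_span (fun ψ hψ => (hΨ ψ hψ).le)
      (hPrange ▸ ⟨Q X, (hcomm X).symm⟩)).trans hcard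
  have hU_inner (W) : frobInner U W = frobInner U (Q (P W)) := by
    conv_lhs => rw [← hU_fixed]
    rw [hQsa, hPsa, hcomm]
  have hRIP : (1 - δ) * frobNorm U ^ 2 ≤ (frobInner U (Q (P (Astar (A U))))).re := by
    rw [← hU_inner, ← hadj.eNorm_sq_eq_re_frobInner]
    exact (hA U hU_rank).1
  exact le_of_mul_sq_le_mul (hRIP.trans (re_frobInner_le_frobNorm_mul _ _))
    (frobNorm_nonneg _) (frobNorm_nonneg _)

/-- If `Q` is an orthogonal projection commuting with `P_Ψ`, then
`(1 − δ_r(A)) ‖Q P_Ψ X‖_F ≤ ‖Q P_Ψ A* A Q P_Ψ X‖_F`. -/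
theorem proj_commute_lower_bound {m n p r : ℕ}
    (A : Matrix (Fin m) (Fin n) ℂ →ₗ[ℂ] (Fin p → ℂ))
    (δ : ℝ) (hδ0 : 0 ≤ δ) (hA : RIPwith A r δ)
    (Astar : (Fin p → ℂ) →ₗ[ℂ] Matrix (Fin m) (Fin n) ℂ) (hadj : IsAdjoint A Astar)
    (Ψ : Finset (Matrix (Fin m) (Fin n) ℂ)) (hΨ : ∀ ψ ∈ Ψ, ψ.rank = 1) (hcard : Ψ.card ≤ r)
    (P : Matrix (Fin m) (Fin n) ℂ →ₗ[ℂ] Matrix (Fin m) (Fin n) ℂ)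
    (hP : IsOrthProjOn P (Ψ : Set (Matrix (Fin m) (Fin n) ℂ)))
    (Q : Matrix (Fin m) (Fin n) ℂ →ₗ[ℂ] Matrix (Fin m) (Fin n) ℂ)
    (hQidem : ∀ X, Q (Q X) = Q X)
    (hQsa : ∀ X Y, frobInner (Q X) Y = frobInner X (Q Y))
    (hcomm : ∀ X, Q (P X) = P (Q X)) :
    ∀ X : Matrix (Fin m) (Fin n) ℂ,
      (1 - δ) * frobNorm (Q (P X)) ≤ frobNorm (Q (P (Astar (A (Q (P X)))))) :=
  proj_commute_lower_bound_general A δ hA Astar hadj Ψ hΨ hcard P hP Q hQidem hQsa hcomm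
end

section
/- Let X₀ ∈ ℂ^{m×n} be arbitrary, X_{0,r} its best rank-r approximation, and b = A X₀ + ν. Then b = A X_{0,r} + ν̃ where ‖ν̃‖₂ ≤ √(1+δ_r(A)) · ( ‖X₀ − X_{0,r}‖_F + ‖X₀ − X_{0,r}‖_*/√r ) + ‖ν‖₂. -/
open scoped BigOperators Matrix ComplexOrder

/-- The singular values of a complex matrix (as square roots of the eigenvalues of `Xᴴ X`). -/
noncomputable def singVals {m n : ℕ} (X : Matrix (Fin m) (Fin n) ℂ) : Fin n → ℝ :=
  fun i => Real.sqrt ((Matrix.posSemidef_conjTranspose_mul_self X).1.eigenvalues i)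

/-- The nuclear norm: sum of all singular values. -/
noncomputable def nuclearNorm {m n : ℕ} (X : Matrix (Fin m) (Fin n) ℂ) : ℝ :=
  ∑ i, singVals X i

/-!
Since `b = A X_{0,r} + (A (X₀ - X_{0,r}) + ν)`, everything reduces to bounding `‖A Z‖₂` for
`Z = X₀ - X_{0,r}`. Order the singular values of `Z` decreasingly and cut them into consecutive
blocks `B₀, B₁, …` of `r` values; correspondingly `Z = ∑ⱼ Z Pⱼ`, where `Pⱼ` projects onto the right
singular vectors of block `j`. Each `Z Pⱼ` has rank at most `r` and Frobenius norm `‖σ_{Bⱼ}‖₂`, so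
the restricted isometry property bounds `‖A (Z Pⱼ)‖₂` by `√(1+δ) ‖σ_{Bⱼ}‖₂`. The first block is
bounded by `‖Z‖_F`; for `j ≥ 1` every value in `Bⱼ` is at most every value in `Bⱼ₋₁`, whence
`‖σ_{Bⱼ}‖₂ ≤ √r · min σ_{Bⱼ₋₁} ≤ ‖σ_{Bⱼ₋₁}‖₁ / √r`, and these sum to at most `‖Z‖_* / √r`.
-/

open Finset

theorem eNorm_eq_norm {p : ℕ} (v : Fin p → ℂ) : eNorm v = ‖WithLp.toLp 2 v‖ := by
  rw [EuclideanSpace.norm_eq]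
  rfl

theorem eNorm_add_le {p : ℕ} (u v : Fin p → ℂ) : eNorm (u + v) ≤ eNorm u + eNorm v := by
  simp only [eNorm_eq_norm, WithLp.toLp_add]
  exact norm_add_le _ _

theorem eNorm_sum_le {p : ℕ} {ι : Type*} (s : Finset ι) (f : ι → Fin p → ℂ) :
    eNorm (∑ j ∈ s, f j) ≤ ∑ j ∈ s, eNorm (f j) := by
  simp only [eNorm_eq_norm, WithLp.toLp_sum]
  exact norm_sum_le _ _

theorem frobNorm_eq_sqrt_re_trace {m n : ℕ} (X : Matrix (Fin m) (Fin n) ℂ) :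
    frobNorm X = √(Xᴴ * X).trace.re := by
  rw [frobNorm, sum_comm]
  congr 1
  simp [Matrix.trace, Matrix.mul_apply, Complex.conj_mul', ← Complex.ofReal_pow]

theorem frobNorm_eq_sqrt_sum_singVals_sq {m n : ℕ} (X : Matrix (Fin m) (Fin n) ℂ) :
    frobNorm X = √(∑ i, singVals X i ^ 2) := by
  have hX := Matrix.posSemidef_conjTranspose_mul_self X
  rw [frobNorm_eq_sqrt_re_trace, hX.1.trace_eq_sum_eigenvalues]
  simp [singVals, Real.sq_sqrt (hX.eigenvalues_nonneg _)]

namespace Matrix.IsHermitian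

variable {𝕜 n : Type*} [RCLike 𝕜] [Fintype n] [DecidableEq n] {A : Matrix n n 𝕜}
  (hA : A.IsHermitian)

noncomputable def eigenProj (S : Finset n) : Matrix n n 𝕜 :=
  (hA.eigenvectorUnitary : Matrix n n 𝕜) * diagonal (fun i => if i ∈ S then 1 else 0) *
    star (hA.eigenvectorUnitary : Matrix n n 𝕜)

theorem rank_eigenProj_le (S : Finset n) : (hA.eigenProj S).rank ≤ #S := by
  classical
  refine (rank_mul_le_left _ _).trans ((rank_mul_le_right _ _).trans ?_)
  rw [rank_diagonal]
  simp [Fintype.card_subtype]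

theorem conjTranspose_eigenProj (S : Finset n) : (hA.eigenProj S)ᴴ = hA.eigenProj S := by
  simp only [eigenProj, conjTranspose_mul, diagonal_conjTranspose, star_eq_conjTranspose,
    conjTranspose_conjTranspose, mul_assoc]
  congr 3
  ext i
  split_ifs <;> simp_all

theorem eigenProj_mul_self (S : Finset n) :
    hA.eigenProj S * hA.eigenProj S = hA.eigenProj S := by
  have hU := Unitary.coe_star_mul_self hA.eigenvectorUnitary
  simp only [eigenProj, mul_assoc]
  rw [← mul_assoc (star _) _ _, hU, one_mul, ← mul_assoc (diagonal _), diagonal_mul_diagonal]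
  congr 3
  ext i
  split_ifs <;> simp

theorem sum_eigenProj_fiber {κ : Type*} [DecidableEq κ] (T : Finset κ) (b : n → κ)
    (hb : ∀ i, b i ∈ T) : ∑ j ∈ T, hA.eigenProj {i | b i = j} = 1 := by
  have hD : ∑ j ∈ T, diagonal (fun i => if i ∈ ({i | b i = j} : Finset n) then (1 : 𝕜) else 0)
      = 1 := by
    ext i k
    simp [Matrix.sum_apply, diagonal_apply, one_apply, hb]
  simp only [eigenProj, ← sum_mul, ← mul_sum, hD, mul_one]
  exact Unitary.coe_mul_star_self _

theorem trace_mul_eigenProj (S : Finset n) :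
    (A * hA.eigenProj S).trace = ∑ i ∈ S, (hA.eigenvalues i : 𝕜) := by
  have h := hA.conjStarAlgAut_star_eigenvectorUnitary
  rw [Unitary.conjStarAlgAut_star_apply] at h
  rw [eigenProj, ← mul_assoc, trace_mul_comm, ← mul_assoc, ← mul_assoc, h]
  simp [trace_diagonal]

end Matrix.IsHermitian

theorem frobNorm_mul_eigenProj {m n : ℕ} (Z : Matrix (Fin m) (Fin n) ℂ) (S : Finset (Fin n)) :
    frobNorm (Z * (Matrix.posSemidef_conjTranspose_mul_self Z).1.eigenProj S)
      = √(∑ i ∈ S, singVals Z i ^ 2) := by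
  have hZ := Matrix.posSemidef_conjTranspose_mul_self Z
  set P := hZ.1.eigenProj S
  have hPZP : (Z * P)ᴴ * (Z * P) = P * (Zᴴ * Z * P) := by
    rw [Matrix.conjTranspose_mul, hZ.1.conjTranspose_eigenProj, Matrix.mul_assoc,
      ← Matrix.mul_assoc Zᴴ]
  rw [frobNorm_eq_sqrt_re_trace, hPZP, Matrix.trace_mul_comm, Matrix.mul_assoc,
    hZ.1.eigenProj_mul_self, hZ.1.trace_mul_eigenProj]
  simp [singVals, Real.sq_sqrt (hZ.eigenvalues_nonneg _)]

section RIP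

variable {m n p r : ℕ} {A : Matrix (Fin m) (Fin n) ℂ →ₗ[ℂ] (Fin p → ℂ)} {δ : ℝ}

theorem RIPwith.eNorm_apply_le (hA : RIPwith A r δ) {X : Matrix (Fin m) (Fin n) ℂ}
    (hX : X.rank ≤ r) : eNorm (A X) ≤ √(1 + δ) * frobNorm X := by
  calc eNorm (A X) = √(eNorm (A X) ^ 2) := (Real.sqrt_sq (Real.sqrt_nonneg _)).symm
    _ ≤ √((1 + δ) * frobNorm X ^ 2) := Real.sqrt_le_sqrt (hA X hX).2
    _ = √(1 + δ) * frobNorm X := by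
      rw [Real.sqrt_mul' _ (sq_nonneg _), Real.sqrt_sq (x := frobNorm X) (Real.sqrt_nonneg _)]

theorem RIPwith.eNorm_apply_le_sum_blocks (hA : RIPwith A r δ) (Z : Matrix (Fin m) (Fin n) ℂ)
    {κ : Type*} [DecidableEq κ] (T : Finset κ) (b : Fin n → κ) (hbT : ∀ i, b i ∈ T)
    (hcard : ∀ j, #{i | b i = j} ≤ r) :
    eNorm (A Z) ≤ √(1 + δ) * ∑ j ∈ T, √(∑ i with b i = j, singVals Z i ^ 2) := by
  have hZ := (Matrix.posSemidef_conjTranspose_mul_self Z).1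
  have hsplit : Z = ∑ j ∈ T, Z * hZ.eigenProj {i | b i = j} := by
    rw [← Matrix.mul_sum, hZ.sum_eigenProj_fiber T b hbT, Matrix.mul_one]
  calc eNorm (A Z) = eNorm (∑ j ∈ T, A (Z * hZ.eigenProj {i | b i = j})) := by
        rw [← map_sum, ← hsplit]
    _ ≤ ∑ j ∈ T, eNorm (A (Z * hZ.eigenProj {i | b i = j})) := eNorm_sum_le _ _
    _ ≤ ∑ j ∈ T, √(1 + δ) * frobNorm (Z * hZ.eigenProj {i | b i = j}) :=
        sum_le_sum fun j _ => hA.eNorm_apply_le <|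
          (Matrix.rank_mul_le_right _ _).trans ((hZ.rank_eigenProj_le _).trans (hcard j))
    _ = _ := by simp_rw [frobNorm_mul_eigenProj, mul_sum]

end RIP

theorem sum_range_sum_Ico_mul {M : Type*} [AddCommMonoid M] (f : ℕ → M) (r K : ℕ) :
    ∑ j ∈ range K, ∑ t ∈ Ico (j * r) (j * r + r), f t = ∑ t ∈ range (K * r), f t := by
  induction K with
  | zero => simp
  | succ K ih => rw [sum_range_succ, ih, sum_range_add_sum_Ico _ (by nlinarith), add_one_mul]

section Blocks

variable {s : ℕ → ℝ} (hs : Antitone s) (hs0 : ∀ t, 0 ≤ s t) (r : ℕ)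
include hs hs0

theorem sqrt_sum_sq_Ico_succ_le (j : ℕ) :
    √(∑ t ∈ Ico ((j + 1) * r) ((j + 1) * r + r), s t ^ 2)
      ≤ (∑ t ∈ Ico (j * r) (j * r + r), s t) / √r := by
  set c := s ((j + 1) * r)
  have hupper : ∑ t ∈ Ico ((j + 1) * r) ((j + 1) * r + r), s t ^ 2 ≤ r * c ^ 2 := by
    simpa using sum_le_card_nsmul (Ico ((j + 1) * r) ((j + 1) * r + r)) (s · ^ 2) (c ^ 2)
      fun t ht => pow_le_pow_left₀ (hs0 t) (hs (mem_Ico.1 ht).1) 2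
  have hlower : r * c ≤ ∑ t ∈ Ico (j * r) (j * r + r), s t := by
    simpa using card_nsmul_le_sum (Ico (j * r) (j * r + r)) s c
      fun t ht => hs (by linarith [(mem_Ico.1 ht).2])
  calc √(∑ t ∈ Ico ((j + 1) * r) ((j + 1) * r + r), s t ^ 2)
      ≤ √(r * c ^ 2) := Real.sqrt_le_sqrt hupper
    _ = r * c / √r := by
      rw [Real.sqrt_mul' _ (sq_nonneg c), Real.sqrt_sq (hs0 _), mul_div_right_comm,
        Real.div_sqrt]
    _ ≤ _ := by gcongr

theorem sum_sqrt_sum_sq_Ico_le (K : ℕ) :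
    ∑ j ∈ range K, √(∑ t ∈ Ico (j * r) (j * r + r), s t ^ 2)
      ≤ √(∑ t ∈ range (K * r), s t ^ 2) + (∑ t ∈ range (K * r), s t) / √r := by
  rcases K with _ | K
  · simp
  have hfirst : √(∑ t ∈ Ico (0 * r) (0 * r + r), s t ^ 2)
      ≤ √(∑ t ∈ range ((K + 1) * r), s t ^ 2) := by
    refine Real.sqrt_le_sqrt (sum_le_sum_of_subset_of_nonneg ?_ fun t _ _ => sq_nonneg _)
    rw [zero_mul, zero_add, ← range_eq_Ico]
    exact range_subset_range.2 (by nlinarith)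
  have hrest : ∑ j ∈ range K, ∑ t ∈ Ico (j * r) (j * r + r), s t
      ≤ ∑ t ∈ range ((K + 1) * r), s t := by
    rw [sum_range_sum_Ico_mul]
    exact sum_le_sum_of_subset_of_nonneg (range_subset_range.2 (by nlinarith))
      fun t _ _ => hs0 t
  rw [sum_range_succ']
  calc ∑ j ∈ range K, √(∑ t ∈ Ico ((j + 1) * r) ((j + 1) * r + r), s t ^ 2)
        + √(∑ t ∈ Ico (0 * r) (0 * r + r), s t ^ 2)
      ≤ (∑ j ∈ range K, ∑ t ∈ Ico (j * r) (j * r + r), s t) / √r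
        + √(∑ t ∈ range ((K + 1) * r), s t ^ 2) := by
        rw [sum_div]
        exact add_le_add (sum_le_sum fun j _ => sqrt_sum_sq_Ico_succ_le hs hs0 r j) hfirst
    _ ≤ _ := by
        rw [add_comm]
        gcongr

end Blocks

theorem Fin.sum_filter_val_mem {M : Type*} [AddCommMonoid M] {n : ℕ} (f : Fin n → M)
    (I : Finset ℕ) :
    ∑ t : Fin n with ↑t ∈ I, f t = ∑ t ∈ I, if h : t < n then f ⟨t, h⟩ else 0 := by
  set F : ℕ → M := fun t => if h : t < n then f ⟨t, h⟩ else 0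
  calc ∑ t : Fin n with ↑t ∈ I, f t = ∑ t : Fin n, if (t : ℕ) ∈ I then F t else 0 := by
        rw [sum_filter]; simp [F]
    _ = ∑ t ∈ range n with t ∈ I, F t := by
        rw [sum_filter, Fin.sum_univ_eq_sum_range (fun t => if t ∈ I then F t else 0)]
    _ = ∑ t ∈ I, F t := by
        rw [filter_mem_eq_inter]
        refine sum_subset inter_subset_right fun t _ ht => ?_
        simp_all [F]

theorem Equiv.Perm.sum_filter_symm_val_mem {M : Type*} [AddCommMonoid M] {n : ℕ}
    (e : Equiv.Perm (Fin n)) (g : Fin n → M) (I : Finset ℕ) :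
    ∑ i with ((e.symm i : Fin n) : ℕ) ∈ I, g i
      = ∑ t ∈ I, if h : t < n then g (e ⟨t, h⟩) else 0 := by
  rw [← Fin.sum_filter_val_mem (fun t => g (e t)), sum_filter, sum_filter, ← Equiv.sum_comp e]
  simp

theorem exists_blocks_sum_sqrt_le {n r : ℕ} (hr : 0 < r) (σ : Fin n → ℝ) (hσ : ∀ i, 0 ≤ σ i) :
    ∃ b : Fin n → ℕ, (∀ i, b i ∈ range n) ∧ (∀ j, #{i | b i = j} ≤ r) ∧
      ∑ j ∈ range n, √(∑ i with b i = j, σ i ^ 2)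
        ≤ √(∑ i, σ i ^ 2) + (∑ i, σ i) / √r := by
  set e := Tuple.sort (OrderDual.toDual ∘ σ)
  -- `σ` sorted decreasingly and extended by zero, so that every block `[j r, j r + r)` is full.
  set s : ℕ → ℝ := fun t => if h : t < n then σ (e ⟨t, h⟩) else 0
  have hs0 : ∀ t, 0 ≤ s t := fun t => by unfold s; split <;> simp [hσ]
  have hs : Antitone s := by
    intro t t' htt'
    by_cases ht' : t' < n
    · simp only [s, dif_pos ht', dif_pos (htt'.trans_lt ht')]
      exact monotone_toDual_comp_iff.1 (Tuple.monotone_sort (OrderDual.toDual ∘ σ))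
        (Fin.mk_le_mk.2 htt')
    · simpa [s, ht'] using hs0 t
  have hsum : ∀ F : ℝ → ℝ, F 0 = 0 → ∀ I : Finset ℕ,
      ∑ i with ((e.symm i : Fin n) : ℕ) ∈ I, F (σ i) = ∑ t ∈ I, F (s t) := by
    intro F hF I
    rw [e.sum_filter_symm_val_mem]
    refine sum_congr rfl fun t _ => ?_
    unfold s; split <;> simp [hF]
  have hsq := hsum (· ^ 2) (by simp)
  have hid := hsum id rfl
  simp only [id] at hsq hid
  have hblock : ∀ i j, (e.symm i : ℕ) / r = j ↔ (e.symm i : ℕ) ∈ Ico (j * r) (j * r + r) := by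
    intro i j
    rw [Nat.div_eq_iff hr, mem_Ico]
    omega
  have hall : ∀ G : Fin n → ℝ,
      ∑ i, G i = ∑ i with ((e.symm i : Fin n) : ℕ) ∈ range (n * r), G i := fun G => by
    rw [filter_true_of_mem fun i _ => mem_range.2 (by nlinarith [(e.symm i).2])]
  refine ⟨fun i => (e.symm i : ℕ) / r, fun i => mem_range.2 ?_, fun j => ?_, ?_⟩
  · exact (Nat.div_le_self _ _).trans_lt (e.symm i).2
  · simp_rw [hblock, card_eq_sum_ones, e.sum_filter_symm_val_mem]
    calc _ ≤ ∑ t ∈ Ico (j * r) (j * r + r), 1 := sum_le_sum fun t _ => by split <;> simp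
      _ = r := by simp
  · simp_rw [hblock, hall, hsq, hid]
    exact sum_sqrt_sum_sq_Ico_le hs hs0 r n

theorem RIPwith.eNorm_apply_le_frobNorm_add_nuclearNorm {m n p r : ℕ} (hr : 0 < r)
    {A : Matrix (Fin m) (Fin n) ℂ →ₗ[ℂ] (Fin p → ℂ)} {δ : ℝ} (hA : RIPwith A r δ)
    (Z : Matrix (Fin m) (Fin n) ℂ) :
    eNorm (A Z) ≤ √(1 + δ) * (frobNorm Z + nuclearNorm Z / √r) := by
  obtain ⟨b, hb, hcard, hblocks⟩ :=
    exists_blocks_sum_sqrt_le hr (singVals Z) fun i => Real.sqrt_nonneg _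
  calc eNorm (A Z) ≤ √(1 + δ) * ∑ j ∈ range n, √(∑ i with b i = j, singVals Z i ^ 2) :=
        hA.eNorm_apply_le_sum_blocks Z _ b hb hcard
    _ ≤ √(1 + δ) * (frobNorm Z + nuclearNorm Z / √r) := by
        rw [frobNorm_eq_sqrt_sum_singVals_sq, nuclearNorm]
        gcongr

theorem noise_lemma_general {m n p r : ℕ} (hr : 1 ≤ r)
    (A : Matrix (Fin m) (Fin n) ℂ →ₗ[ℂ] (Fin p → ℂ))
    (δ : ℝ) (hA : RIPwith A r δ)
    (X₀ X0r : Matrix (Fin m) (Fin n) ℂ)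
    (ν b : Fin p → ℂ) (hb : b = A X₀ + ν) :
    ∃ νtilde : Fin p → ℂ, b = A X0r + νtilde ∧
      eNorm νtilde ≤ Real.sqrt (1 + δ) *
          (frobNorm (X₀ - X0r) + nuclearNorm (X₀ - X0r) / Real.sqrt r)
        + eNorm ν := by
  refine ⟨A (X₀ - X0r) + ν, by rw [hb, ← add_assoc, ← map_add, add_sub_cancel], ?_⟩
  calc eNorm (A (X₀ - X0r) + ν) ≤ eNorm (A (X₀ - X0r)) + eNorm ν := eNorm_add_le _ _
    _ ≤ _ := by
      gcongr
      exact hA.eNorm_apply_le_frobNorm_add_nuclearNorm hr _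

/-- Noise conversion lemma: with `X_{0,r}` a best rank-`r` approximation of `X₀`
and `b = A X₀ + ν`, we can write `b = A X_{0,r} + ν̃` with
`‖ν̃‖₂ ≤ √(1+δ_r(A)) (‖X₀ − X_{0,r}‖_F + ‖X₀ − X_{0,r}‖_*/√r) + ‖ν‖₂`. -/
theorem noise_lemma {m n p r : ℕ} (hr : 1 ≤ r)
    (A : Matrix (Fin m) (Fin n) ℂ →ₗ[ℂ] (Fin p → ℂ))
    (δ : ℝ) (hδ0 : 0 ≤ δ) (hA : RIPwith A r δ)
    (X₀ X0r : Matrix (Fin m) (Fin n) ℂ)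
    (hrank : X0r.rank ≤ r)
    (hbest : ∀ Y : Matrix (Fin m) (Fin n) ℂ, Y.rank ≤ r →
      frobNorm (X₀ - X0r) ≤ frobNorm (X₀ - Y))
    (ν b : Fin p → ℂ) (hb : b = A X₀ + ν) :
    ∃ νtilde : Fin p → ℂ, b = A X0r + νtilde ∧
      eNorm νtilde ≤ Real.sqrt (1 + δ) *
          (frobNorm (X₀ - X0r) + nuclearNorm (X₀ - X0r) / Real.sqrt r)
        + eNorm ν :=
  noise_lemma_general hr A δ hA X₀ X0r ν b hb
end
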